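/- arXiv:2501.12132 — 7 statements merged into one kernel-verified Lean document; each statement's English description precedes it below -/
import Mathlib

section
/- Let S be a numerical semigroup and z a nonzero element of S. Then z is an Arf element of S if and only if for all x, y in the Apéry set Ap(S,z) with x > z and y > z, the sum x + y is not in Ap(S,z). -/
/-- A numerical semigroup: an additive submonoid of ℕ with finite complement. -/
structure NumSgp where
  carrier : Set ℕ
  zero_mem : 0 ∈ carrier
  add_mem : ∀ ⦃a b : ℕ⦄, a ∈ carrier → b ∈ carrier → a + b ∈ carrier
  cofinite : carrierᶜ.Finite

/-- The multiplicity: the smallest nonzero element. -/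
noncomputable def NumSgp.mult (S : NumSgp) : ℕ := sInf {n | n ∈ S.carrier ∧ n ≠ 0}

/-- The Apéry set of `S` with respect to `s`: elements `x ∈ S` with `x - s ∉ S`
(over the integers, i.e. there is no `y ∈ S` with `y + s = x`). -/
def NumSgp.Ap (S : NumSgp) (s : ℕ) : Set ℕ :=
  {x | x ∈ S.carrier ∧ ∀ y ∈ S.carrier, y + s ≠ x}

/-- `z` is an Arf element of `S`. -/
def NumSgp.ArfElem (S : NumSgp) (z : ℕ) : Prop :=
  ∀ x ∈ S.carrier, ∀ y ∈ S.carrier, z ≤ x → z ≤ y → x + y - z ∈ S.carrier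

/-- The minimal generating set: nonzero elements not expressible as a sum of two
nonzero elements of `S`. -/
def NumSgp.minGen (S : NumSgp) : Set ℕ :=
  {x | x ∈ S.carrier ∧ x ≠ 0 ∧ ∀ a ∈ S.carrier, ∀ b ∈ S.carrier, a ≠ 0 → b ≠ 0 → a + b ≠ x}

/-- The embedding dimension: the cardinality of the minimal generating set. -/
noncomputable def NumSgp.edim (S : NumSgp) : ℕ := S.minGen.ncard

/-- The Frobenius number: the largest gap. -/
noncomputable def NumSgp.frob (S : NumSgp) : ℕ := sSup S.carrierᶜ

/-- The conductor: the smallest `c` with `c + ℤ≥0 ⊆ S`. -/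
noncomputable def NumSgp.cond (S : NumSgp) : ℕ := sInf {c | ∀ n, c ≤ n → n ∈ S.carrier}

/-- The genus: the number of gaps. -/
noncomputable def NumSgp.genus (S : NumSgp) : ℕ := S.carrierᶜ.ncard

/-- The set of pseudo-Frobenius numbers. -/
def NumSgp.PF (S : NumSgp) : Set ℕ :=
  {x | x ∉ S.carrier ∧ ∀ s ∈ S.carrier, s ≠ 0 → x + s ∈ S.carrier}

/-- The type of `S`: the number of pseudo-Frobenius numbers. -/
noncomputable def NumSgp.type (S : NumSgp) : ℕ := S.PF.ncard

/-- `S` is a MED semigroup: its multiplicity is an Arf element, i.e. for all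
`x, y ∈ S` with `x, y ≥ m(S)`, `x + y - m(S) ∈ S`. -/
def NumSgp.IsMED (S : NumSgp) : Prop := S.ArfElem S.mult

/-- The MED closure of `S`: the intersection of all MED numerical semigroups
containing `S` with the same multiplicity. -/
def NumSgp.MEDclosure (S : NumSgp) : Set ℕ :=
  ⋂ T ∈ {T : NumSgp | S.carrier ⊆ T.carrier ∧ T.mult = S.mult ∧ T.IsMED}, T.carrier

/-!
For `x ∈ S` with `z ≤ x`, `x ∉ Ap(S,z)` means `x - z ∈ S`, and then `x + y - z = (x - z) + y ∈ S`.
So the Arf condition only has to be checked for `x, y ∈ Ap(S,z)`; the cases `x = z` or `y = z` are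
trivial, and for `x, y > z` it says exactly that `x + y ∉ Ap(S,z)`.
-/

namespace NumSgp

variable (S : NumSgp) {x y z : ℕ}

theorem notMem_Ap_iff_sub_mem (hx : x ∈ S.carrier) (hzx : z ≤ x) :
    x ∉ S.Ap z ↔ x - z ∈ S.carrier := by
  simp only [Ap, Set.mem_ofPred_eq, hx, true_and, not_forall, not_not, exists_prop]
  constructor
  · rintro ⟨w, hw, rfl⟩
    simpa using hw
  · exact fun h => ⟨x - z, h, Nat.sub_add_cancel hzx⟩

theorem add_sub_mem_of_sub_mem (hx : x - z ∈ S.carrier) (hy : y ∈ S.carrier) (hzx : z ≤ x) :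
    x + y - z ∈ S.carrier := by
  rw [Nat.sub_add_comm hzx]
  exact S.add_mem hx hy

end NumSgp

theorem arf_iff_apery_sumfree_general (S : NumSgp) (z : ℕ) :
    S.ArfElem z ↔ ∀ x ∈ S.Ap z, ∀ y ∈ S.Ap z, z < x → z < y → x + y ∉ S.Ap z := by
  constructor
  · intro hArf x hx y hy hzx hzy
    rw [S.notMem_Ap_iff_sub_mem (S.add_mem hx.1 hy.1) (by omega)]
    exact hArf x hx.1 y hy.1 hzx.le hzy.le
  · intro hsum x hx y hy hzx hzy
    by_cases hxA : x ∉ S.Ap z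
    · exact S.add_sub_mem_of_sub_mem ((S.notMem_Ap_iff_sub_mem hx hzx).1 hxA) hy hzx
    by_cases hyA : y ∉ S.Ap z
    · rw [add_comm]
      exact S.add_sub_mem_of_sub_mem ((S.notMem_Ap_iff_sub_mem hy hzy).1 hyA) hx hzy
    rw [not_not] at hxA hyA
    rcases hzx.eq_or_lt with rfl | hzx'
    · simpa using hy
    rcases hzy.eq_or_lt with rfl | hzy'
    · simpa using hx
    exact (S.notMem_Ap_iff_sub_mem (S.add_mem hx hy) (by omega)).1 (hsum x hxA y hyA hzx' hzy')

theorem arf_iff_apery_sumfree (S : NumSgp) (z : ℕ) (hz : z ∈ S.carrier) (hz0 : z ≠ 0) :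
    S.ArfElem z ↔ ∀ x ∈ S.Ap z, ∀ y ∈ S.Ap z, z < x → z < y → x + y ∉ S.Ap z :=
  arf_iff_apery_sumfree_general S z
end

section
/- A numerical semigroup S is of maximal embedding dimension (i.e., e(S) = m(S)) if and only if the multiplicity m(S) is an Arf element of S. -/
/-! The Apéry set of `m = m(S)` has exactly `m` elements, one in each residue class mod `m`,
and every minimal generator other than `m` is a nonzero Apéry element. Hence `e(S) ≤ m`, with
equality iff every nonzero Apéry element is a minimal generator. A nonzero element `w ∈ S`
fails to be a minimal generator iff `w = x + y` with `x, y ≥ m` in `S`, and such a `w` lies in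
the Apéry set iff `x + y - m ∉ S`; so equality holds iff `m` is an Arf element. -/

open Set

namespace NumSgp

variable (S : NumSgp)

lemma exists_forall_ge_mem : ∃ N, ∀ n, N ≤ n → n ∈ S.carrier := by
  obtain ⟨B, hB⟩ := S.cofinite.bddAbove
  exact ⟨B + 1, fun n hn => by_contra fun h => absurd (hB h) (by omega)⟩

lemma mult_mem_and_ne_zero : S.mult ∈ S.carrier ∧ S.mult ≠ 0 := by
  obtain ⟨N, hN⟩ := S.exists_forall_ge_mem
  exact Nat.sInf_mem (s := {n | n ∈ S.carrier ∧ n ≠ 0}) ⟨N + 1, hN _ (by omega), by omega⟩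

lemma mult_mem : S.mult ∈ S.carrier := S.mult_mem_and_ne_zero.1

lemma mult_ne_zero : S.mult ≠ 0 := S.mult_mem_and_ne_zero.2

lemma mult_pos : 0 < S.mult := Nat.pos_of_ne_zero S.mult_ne_zero

variable {S}

lemma mult_le {x : ℕ} (hx : x ∈ S.carrier) (hx0 : x ≠ 0) : S.mult ≤ x :=
  Nat.sInf_le ⟨hx, hx0⟩

lemma add_mul_mem {x s : ℕ} (hx : x ∈ S.carrier) (hs : s ∈ S.carrier) (k : ℕ) :
    x + k * s ∈ S.carrier := by
  induction k with
  | zero => simpa using hx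
  | succ k ih => simpa [add_mul, ← add_assoc] using S.add_mem ih hs

lemma zero_mem_Ap {s : ℕ} (hs : s ≠ 0) : 0 ∈ S.Ap s :=
  ⟨S.zero_mem, fun _ _ h => hs (by omega)⟩

lemma notMem_Ap_self {s : ℕ} : s ∉ S.Ap s :=
  fun h => h.2 0 S.zero_mem (zero_add s)

lemma le_of_mem_Ap_of_modEq {s x y : ℕ} (hs : s ∈ S.carrier) (hx : x ∈ S.carrier)
    (hy : y ∈ S.Ap s) (hxy : x ≡ y [MOD s]) : y ≤ x := by
  by_contra! hlt
  obtain ⟨k, hk⟩ := (Nat.modEq_iff_dvd' hlt.le).mp hxy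
  obtain ⟨j, rfl⟩ := Nat.exists_eq_add_of_lt (Nat.pos_of_ne_zero (by rintro rfl; omega) : 0 < k)
  refine hy.2 _ (add_mul_mem hx hs j) ?_
  rw [zero_add, mul_add, mul_one, mul_comm] at hk
  omega

variable (S)

lemma Ap_mult_injOn_mod : InjOn (· % S.mult) (S.Ap S.mult) :=
  fun _ hx _ hy hmod => le_antisymm (le_of_mem_Ap_of_modEq S.mult_mem hy.1 hx hmod.symm)
    (le_of_mem_Ap_of_modEq S.mult_mem hx.1 hy hmod)

lemma Ap_mult_mapsTo_mod : MapsTo (· % S.mult) (S.Ap S.mult) (Iio S.mult) :=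
  fun x _ => Nat.mod_lt x S.mult_pos

lemma Ap_mult_surjOn_mod : SurjOn (· % S.mult) (S.Ap S.mult) (Iio S.mult) := by
  intro i (hi : i < S.mult)
  set A := {x | x ∈ S.carrier ∧ x % S.mult = i}
  have hA : A.Nonempty := by
    obtain ⟨N, hN⟩ := S.exists_forall_ge_mem
    refine ⟨i + N * S.mult, hN _ (le_add_left (Nat.le_mul_of_pos_right N S.mult_pos)), ?_⟩
    simp only [Nat.add_mul_mod_self_right, Nat.mod_eq_of_lt hi]
  obtain ⟨hmin, hmod⟩ := Nat.sInf_mem hA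
  refine ⟨sInf A, ⟨hmin, fun y hy hyx => ?_⟩, hmod⟩
  have hyA : y ∈ A := ⟨hy, by rw [← hmod, ← hyx, Nat.add_mod_right]⟩
  have := Nat.sInf_le hyA
  have := S.mult_ne_zero
  omega

lemma ncard_Ap_mult : (S.Ap S.mult).ncard = S.mult := by
  rw [← S.Ap_mult_injOn_mod.ncard_image,
    S.Ap_mult_surjOn_mod.image_eq_of_mapsTo S.Ap_mult_mapsTo_mod,
    ← Finset.coe_range, ncard_coe_finset, Finset.card_range]

lemma Ap_mult_finite : (S.Ap S.mult).Finite :=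
  ((finite_Iio S.mult).subset S.Ap_mult_mapsTo_mod.image_subset).of_finite_image
    S.Ap_mult_injOn_mod

lemma ncard_insert_mult_Ap_diff_zero :
    (insert S.mult (S.Ap S.mult \ {0})).ncard = S.mult := by
  rw [ncard_insert_of_notMem (fun h => notMem_Ap_self h.1) S.Ap_mult_finite.sdiff,
    ncard_sdiff_singleton_of_mem (zero_mem_Ap S.mult_ne_zero), ncard_Ap_mult]
  have := S.mult_ne_zero
  omega

lemma mult_mem_minGen : S.mult ∈ S.minGen :=
  ⟨S.mult_mem, S.mult_ne_zero, fun a ha b hb ha0 hb0 hab => by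
    have := mult_le ha ha0
    have := mult_le hb hb0
    omega⟩

lemma minGen_subset_insert_mult_Ap : S.minGen ⊆ insert S.mult (S.Ap S.mult \ {0}) := by
  rintro g ⟨hgS, hg0, hg⟩
  refine or_iff_not_imp_left.mpr fun hgm => ⟨⟨hgS, fun y hy hyg => ?_⟩, hg0⟩
  exact hg y hy S.mult S.mult_mem (by rintro rfl; exact hgm (by omega)) S.mult_ne_zero hyg

lemma edim_eq_mult_iff : S.edim = S.mult ↔ S.Ap S.mult \ {0} ⊆ S.minGen := by
  rw [← insert_subset_iff.trans (and_iff_right S.mult_mem_minGen)]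
  constructor
  · intro h
    refine (eq_of_subset_of_ncard_le S.minGen_subset_insert_mult_Ap ?_
      (S.Ap_mult_finite.sdiff.insert _)).symm.subset
    rw [ncard_insert_mult_Ap_diff_zero, ← h, edim]
  · intro h
    rw [edim, S.minGen_subset_insert_mult_Ap.antisymm h, ncard_insert_mult_Ap_diff_zero]

lemma Ap_mult_diff_zero_subset_minGen_iff :
    S.Ap S.mult \ {0} ⊆ S.minGen ↔ S.ArfElem S.mult := by
  constructor
  · intro h x hx y hy hmx hmy
    by_contra hxy
    have hAp : x + y ∈ S.Ap S.mult :=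
      ⟨S.add_mem hx hy, fun z hz hzxy => hxy (by rwa [← hzxy, Nat.add_sub_cancel])⟩
    have hm := S.mult_ne_zero
    exact (h ⟨hAp, by rw [mem_singleton_iff]; omega⟩).2.2 x hx y hy (by omega) (by omega) rfl
  · rintro harf g ⟨⟨hgS, hgAp⟩, hg0⟩
    refine ⟨hgS, hg0, fun a ha b hb ha0 hb0 hab => ?_⟩
    have hm := mult_le ha ha0
    exact hgAp _ (harf a ha b hb hm (mult_le hb hb0)) (by omega)

end NumSgp

theorem med_iff_mult_arf (S : NumSgp) :
    S.edim = S.mult ↔ S.ArfElem S.mult :=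
  S.edim_eq_mult_iff.trans S.Ap_mult_diff_zero_subset_minGen_iff
end

section
/- Every Arf numerical semigroup has maximal embedding dimension. -/
theorem arf_semigroup_is_med (S : NumSgp)
    (harf : ∀ x ∈ S.carrier, ∀ y ∈ S.carrier, ∀ z ∈ S.carrier,
      z ≤ y → y ≤ x → x + y - z ∈ S.carrier) :
    S.edim = S.mult := by
  classical
  set m := S.mult with hmdef
  have hSinf : S.carrier.Infinite := by
    rw [← compl_compl S.carrier]
    exact S.cofinite.infinite_compl
  have hne : {n | n ∈ S.carrier ∧ n ≠ 0}.Nonempty := by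
    obtain ⟨x, hx, hx0⟩ := (hSinf.diff (Set.finite_singleton 0)).nonempty
    exact ⟨x, hx, by simpa using hx0⟩
  have hmS : m ∈ S.carrier ∧ m ≠ 0 := Nat.sInf_mem hne
  have hmpos : 0 < m := Nat.pos_of_ne_zero hmS.2
  have hmle : ∀ s ∈ S.carrier, s ≠ 0 → m ≤ s := fun s hs h0 => Nat.sInf_le ⟨hs, h0⟩
  have hmul : ∀ k : ℕ, k * m ∈ S.carrier := by
    intro k; induction k with
    | zero => simpa using S.zero_mem
    | succ n ih => rw [Nat.succ_mul]; exact S.add_mem ih hmS.1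
  have hlarge : ∀ n, sSup S.carrierᶜ < n → n ∈ S.carrier := by
    intro n hn
    by_contra h
    exact absurd (le_csSup S.cofinite.bddAbove h) (not_le.2 hn)
  set W : ℕ → ℕ := fun i => sInf {x | x ∈ S.carrier ∧ x % m = i} with hWdef
  have hWmem : ∀ i < m, W i ∈ S.carrier ∧ W i % m = i := by
    intro i hi
    have hne' : {x | x ∈ S.carrier ∧ x % m = i}.Nonempty := by
      refine ⟨i + m * (sSup S.carrierᶜ + 1), ?_, ?_⟩
      · apply hlarge
        calc sSup S.carrierᶜ < sSup S.carrierᶜ + 1 := Nat.lt_succ_self _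
          _ ≤ m * (sSup S.carrierᶜ + 1) := Nat.le_mul_of_pos_left _ hmpos
          _ ≤ i + m * (sSup S.carrierᶜ + 1) := Nat.le_add_left _ _
      · simp [Nat.add_mul_mod_self_left, Nat.mod_eq_of_lt hi]
    exact Nat.sInf_mem hne'
  have hWle : ∀ i, ∀ x ∈ S.carrier, x % m = i → W i ≤ x :=
    fun i x hx hxi => Nat.sInf_le ⟨hx, hxi⟩
  have hWi0 : ∀ j, 0 < j → j < m → W j ≠ 0 := by
    intro j hj0 hjm h
    have h2 := (hWmem j hjm).2
    rw [h, Nat.zero_mod] at h2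
    omega
  have hgen : S.minGen = insert m (W '' {i | 0 < i ∧ i < m}) := by
    ext x
    constructor
    · rintro ⟨hxS, hx0, hxnd⟩
      by_cases hmod : x % m = 0
      · -- x is a multiple of m; must equal m
        left
        obtain ⟨q, hq⟩ : ∃ q, x = q * m := by
          obtain ⟨q, hq⟩ := Nat.dvd_of_mod_eq_zero hmod
          exact ⟨q, by rw [hq, Nat.mul_comm]⟩
        have hq1 : 1 ≤ q := by
          rcases Nat.eq_zero_or_pos q with rfl | h
          · simp at hq; exact absurd hq hx0
          · exact h
        by_contra hne'
        have hq2 : 2 ≤ q := by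
          rcases Nat.lt_or_ge q 2 with h | h
          · exfalso; apply hne'
            have hq1' : q = 1 := by omega
            rw [hq, hq1', Nat.one_mul]
          · exact h
        refine hxnd m hmS.1 ((q - 1) * m) (hmul (q - 1)) hmS.2
          (Nat.mul_ne_zero (by omega) hmS.2) ?_
        rw [hq]
        conv_rhs => rw [show q = (q - 1) + 1 by omega]
        rw [Nat.add_mul, Nat.one_mul, Nat.add_comm]
      · right
        set i := x % m with hidef
        have hi : 0 < i ∧ i < m := ⟨Nat.pos_of_ne_zero hmod, Nat.mod_lt x hmpos⟩
        have hWi := hWmem i hi.2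
        have hle : W i ≤ x := hWle i x hxS rfl
        rcases eq_or_lt_of_le hle with heq | hlt
        · exact ⟨i, hi, heq⟩
        · exfalso
          obtain ⟨a, ha⟩ : ∃ a, x = m * a + i := by
            refine ⟨x / m, ?_⟩
            rw [hidef]
            exact (Nat.div_add_mod x m).symm
          obtain ⟨b, hb⟩ : ∃ b, W i = m * b + i := by
            refine ⟨W i / m, ?_⟩
            have h := Nat.div_add_mod (W i) m
            rw [hWi.2] at h
            exact h.symm
          have hba : b ≤ a := Nat.le_of_mul_le_mul_left (by omega) hmpos
          have hdiff : x - W i = (a - b) * m := by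
            rw [ha, hb, Nat.add_sub_add_right, Nat.sub_mul,
              Nat.mul_comm a m, Nat.mul_comm b m]
          have hdmem : x - W i ∈ S.carrier := hdiff ▸ hmul (a - b)
          exact hxnd (W i) hWi.1 (x - W i) hdmem (hWi0 i hi.1 hi.2) (by omega) (by omega)
    · rintro (rfl | ⟨i, ⟨hi0, him⟩, rfl⟩)
      · refine ⟨hmS.1, hmS.2, fun a ha b hb ha0 hb0 hab => ?_⟩
        have h1 := hmle a ha ha0
        have h2 := hmle b hb hb0
        omega
      · have hWi := hWmem i him
        refine ⟨hWi.1, hWi0 i hi0 him, fun a ha b hb ha0 hb0 hab => ?_⟩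
        have h1 := hmle a ha ha0
        have h2 := hmle b hb hb0
        have hsum : a + b - m ∈ S.carrier := by
          rcases le_total a b with h | h
          · have := harf b hb a ha m hmS.1 h1 h
            rwa [show b + a - m = a + b - m by omega] at this
          · exact harf a ha b hb m hmS.1 h2 h
        rw [hab] at hsum
        have hWm : m ≤ W i := hmle (W i) hWi.1 (hWi0 i hi0 him)
        have hmodWi : (W i - m) % m = i := by
          obtain ⟨b', hb'⟩ : ∃ b', W i = m * b' + i := by
            refine ⟨W i / m, ?_⟩
            have h := Nat.div_add_mod (W i) m
            rw [hWi.2] at h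
            exact h.symm
          have hb1 : 1 ≤ b' := by
            rcases Nat.eq_zero_or_pos b' with rfl | h
            · rw [Nat.mul_zero, Nat.zero_add] at hb'; omega
            · exact h
          have hmb : m ≤ m * b' := by
            calc m = m * 1 := (Nat.mul_one m).symm
              _ ≤ m * b' := Nat.mul_le_mul_left m hb1
          have heq2 : W i - m = m * (b' - 1) + i := by
            rw [Nat.mul_sub, Nat.mul_one]
            omega
          rw [heq2, Nat.mul_add_mod]
          exact Nat.mod_eq_of_lt him
        have := hWle i (W i - m) hsum hmodWi
        omega
  rw [NumSgp.edim, hgen]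
  have hIoo : {i | 0 < i ∧ i < m} = ↑(Finset.Ioo 0 m) := by ext j; simp
  have hinj : Set.InjOn W {i | 0 < i ∧ i < m} := by
    intro i hi j hj hij
    have h1 := (hWmem i hi.2).2
    have h2 := (hWmem j hj.2).2
    rw [← h1, ← h2, hij]
  have himfin : (W '' {i | 0 < i ∧ i < m}).Finite := by
    rw [hIoo]
    exact (Finset.Ioo 0 m).finite_toSet.image W
  have hnm : m ∉ W '' {i | 0 < i ∧ i < m} := by
    rintro ⟨i, ⟨hi0, him⟩, hWi⟩
    have := (hWmem i him).2
    rw [hWi, Nat.mod_self] at this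
    omega
  rw [Set.ncard_insert_of_notMem hnm himfin,
    Set.ncard_image_of_injOn hinj, hIoo, Set.ncard_coe_finset, Nat.card_Ioo]
  omega
end

section
/- Let S be a numerical semigroup with pseudo-Frobenius set PF(S) = {x_1 > x_2 > ... > x_t} (so x_1 = f(S)). Then for every r with 1 ≤ r ≤ t, the set T = S ∪ {x_1, ..., x_r} is a numerical semigroup. -/
/-! Adding a pseudo-Frobenius number to an element of `S \ {0}` lands in `S`, and the sum of two
pseudo-Frobenius numbers is either in `S` or again pseudo-Frobenius and larger than both. So any
set `X` of pseudo-Frobenius numbers that contains every pseudo-Frobenius number above its elements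
makes `S ∪ X` closed under addition; cofiniteness is inherited from `S`. -/

namespace NumSgp

theorem ne_zero_of_not_mem {S : NumSgp} {x : ℕ} (hx : x ∉ S.carrier) : x ≠ 0 := by
  rintro rfl
  exact hx S.zero_mem

theorem add_mem_PF_of_not_mem {S : NumSgp} {a b : ℕ} (ha : a ∈ S.PF) (hb : b ∈ S.PF)
    (hab : a + b ∉ S.carrier) : a + b ∈ S.PF := by
  refine ⟨hab, fun s hs hs0 => ?_⟩
  have has : a + s ∈ S.carrier := ha.2 s hs hs0
  rw [add_right_comm, add_comm]
  exact hb.2 _ has (by omega)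

def ofSuperset (S : NumSgp) (T : Set ℕ) (hST : S.carrier ⊆ T)
    (hadd : ∀ ⦃a b : ℕ⦄, a ∈ T → b ∈ T → a + b ∈ T) : NumSgp where
  carrier := T
  zero_mem := hST S.zero_mem
  add_mem := hadd
  cofinite := S.cofinite.subset (Set.compl_subset_compl.mpr hST)

theorem add_mem_union_of_mem_PF {S : NumSgp} {s x : ℕ} {X : Set ℕ} (hs : s ∈ S.carrier)
    (hx : x ∈ S.PF) (hxX : x ∈ X) : s + x ∈ S.carrier ∪ X := by
  rcases eq_or_ne s 0 with rfl | hs0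
  · exact Or.inr (by simpa using hxX)
  · exact Or.inl (by rw [add_comm]; exact hx.2 s hs hs0)

theorem add_mem_union_of_PF_upper {S : NumSgp} {X : Set ℕ} (hXPF : X ⊆ S.PF)
    (htop : ∀ x ∈ X, ∀ y ∈ S.PF, y ∉ X → y < x) :
    ∀ ⦃a b : ℕ⦄, a ∈ S.carrier ∪ X → b ∈ S.carrier ∪ X → a + b ∈ S.carrier ∪ X := by
  rintro a b (ha | ha) (hb | hb)
  · exact Or.inl (S.add_mem ha hb)
  · exact add_mem_union_of_mem_PF ha (hXPF hb) hb
  · rw [add_comm]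
    exact add_mem_union_of_mem_PF hb (hXPF ha) ha
  · by_cases hab : a + b ∈ S.carrier
    · exact Or.inl hab
    have habPF : a + b ∈ S.PF := add_mem_PF_of_not_mem (hXPF ha) (hXPF hb) hab
    have hb0 : b ≠ 0 := ne_zero_of_not_mem (hXPF hb).1
    by_contra habX
    have := htop a ha (a + b) habPF (fun h => habX (Or.inr h))
    omega

end NumSgp

theorem union_top_pf_is_semigroup_general (S : NumSgp) (X : Finset ℕ)
    (hXPF : ↑X ⊆ S.PF)
    (htop : ∀ x ∈ X, ∀ y ∈ S.PF, y ∉ X → y < x) :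
    ∃ T : NumSgp, T.carrier = S.carrier ∪ ↑X :=
  ⟨S.ofSuperset _ Set.subset_union_left (NumSgp.add_mem_union_of_PF_upper hXPF htop), rfl⟩

theorem union_top_pf_is_semigroup (S : NumSgp) (r : ℕ) (X : Finset ℕ)
    (hXPF : ↑X ⊆ S.PF) (hr : X.card = r) (hr1 : 1 ≤ r) (hrt : r ≤ S.PF.ncard)
    (htop : ∀ x ∈ X, ∀ y ∈ S.PF, y ∉ X → y < x) :
    ∃ T : NumSgp, T.carrier = S.carrier ∪ ↑X :=
  union_top_pf_is_semigroup_general S X hXPF htop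
end

section
/- Let S be a numerical semigroup with genus g(S), and let S_r = S ∪ {x_1, ..., x_r} where x_1 > ... > x_r are the r largest pseudo-Frobenius numbers of S. Then the conductor of S satisfies c(S) ≤ 2g(S) - r + 1. -/
/-! Let `F` be the Frobenius number. The reflection `s ↦ F - s` maps the elements of `S` below `F`
injectively to gaps, and hits no pseudo-Frobenius number `f ≠ F` (else `f + (F - f) = F ∈ S`).
With `n` the number of elements of `S` below `F`, counting gaps gives `n + (r - 1) ≤ g`,
while `n + g = F + 1 ≥ c`. -/

namespace NumSgp

open Finset

variable (S : NumSgp)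

lemma le_frob {t : ℕ} (ht : t ∉ S.carrier) : t ≤ S.frob :=
  le_csSup S.cofinite.bddAbove ht

lemma mem_of_frob_lt {n : ℕ} (hn : S.frob < n) : n ∈ S.carrier := by
  by_contra h
  exact (S.le_frob h).not_gt hn

lemma cond_le_frob_add_one : S.cond ≤ S.frob + 1 :=
  Nat.sInf_le fun _ hn => S.mem_of_frob_lt hn

lemma frob_notMem {S : NumSgp} (h : S.carrierᶜ.Nonempty) : S.frob ∉ S.carrier :=
  h.csSup_mem S.cofinite

lemma frob_sub_notMem_of_le_frob {S : NumSgp} (h : S.carrierᶜ.Nonempty) {s : ℕ}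
    (hs : s ∈ S.carrier) (hsF : s ≤ S.frob) : S.frob - s ∉ S.carrier := fun hmem =>
  frob_notMem h (by simpa [hsF] using S.add_mem hs hmem)

lemma frob_sub_notMem_of_mem_PF {S : NumSgp} (h : S.carrierᶜ.Nonempty) {f : ℕ}
    (hf : f ∈ S.PF) (hfF : f ≠ S.frob) : S.frob - f ∉ S.carrier := fun hmem => by
  have hle := S.le_frob hf.1
  exact frob_notMem h (by simpa [hle] using hf.2 _ hmem (by omega))

open scoped Classical in
noncomputable def smallElements : Finset ℕ := {s ∈ range (S.frob + 1) | s ∈ S.carrier}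

lemma mem_smallElements {s : ℕ} : s ∈ S.smallElements ↔ s ≤ S.frob ∧ s ∈ S.carrier := by
  simp [smallElements]

open scoped Classical in
lemma genus_eq_card_gaps_le_frob : S.genus = #{t ∈ range (S.frob + 1) | t ∉ S.carrier} := by
  rw [genus, ← Set.ncard_coe_finset]
  congr 1
  ext t
  simp only [Set.mem_compl_iff, coe_filter, mem_range, Set.mem_ofPred_eq, iff_and_self]
  exact fun ht => Nat.lt_succ_of_le (S.le_frob ht)

lemma frob_add_one_eq : S.frob + 1 = #S.smallElements + S.genus := by
  classical
  rw [genus_eq_card_gaps_le_frob, smallElements, card_filter_add_card_filter_not, card_range]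

lemma card_smallElements_add_card_le_genus {S : NumSgp} (h : S.carrierᶜ.Nonempty)
    {Y : Finset ℕ} (hY : ↑Y ⊆ S.PF) (hF : S.frob ∉ Y) : #S.smallElements + #Y ≤ S.genus := by
  classical
  set R := S.smallElements.image (S.frob - ·)
  have hinj : Set.InjOn (S.frob - ·) S.smallElements := fun s hs t ht hst => by
    have := (S.mem_smallElements.1 hs).1
    have := (S.mem_smallElements.1 ht).1
    simp only at hst
    omega
  have hdisj : Disjoint R Y := by
    refine disjoint_left.mpr fun g hg hgY => ?_
    obtain ⟨s, hs, rfl⟩ := mem_image.mp hg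
    obtain ⟨hsF, hsS⟩ := S.mem_smallElements.1 hs
    refine frob_sub_notMem_of_mem_PF h (hY hgY) (fun he => hF (he ▸ hgY)) ?_
    rwa [Nat.sub_sub_self hsF]
  have hsub : R ∪ Y ⊆ {t ∈ range (S.frob + 1) | t ∉ S.carrier} := by
    refine union_subset (fun g hg => ?_) (fun f hf => ?_)
    · obtain ⟨s, hs, rfl⟩ := mem_image.mp hg
      obtain ⟨hsF, hsS⟩ := S.mem_smallElements.1 hs
      exact mem_filter.mpr ⟨by simp only [mem_range]; omega, frob_sub_notMem_of_le_frob h hsS hsF⟩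
    · exact mem_filter.mpr ⟨mem_range.mpr (Nat.lt_succ_of_le (S.le_frob (hY hf).1)), (hY hf).1⟩
  calc #S.smallElements + #Y = #(R ∪ Y) := by
        rw [card_union_of_disjoint hdisj, card_image_of_injOn hinj]
    _ ≤ S.genus := S.genus_eq_card_gaps_le_frob ▸ card_le_card hsub

lemma frob_add_card_le_two_mul_genus {Y : Finset ℕ} (hY : ↑Y ⊆ S.PF) :
    S.frob + #Y ≤ 2 * S.genus := by
  rcases S.carrierᶜ.eq_empty_or_nonempty with h | h
  · have hY : Y = ∅ := eq_empty_of_forall_notMem fun f hf => (h ▸ (hY hf).1 : f ∈ (∅ : Set ℕ))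
    simp [frob, h, hY]
  · have := card_smallElements_add_card_le_genus h (Y := Y.erase S.frob)
      ((coe_erase S.frob Y ▸ Set.sdiff_subset).trans hY) (notMem_erase _ _)
    have := pred_card_le_card_erase (s := Y) (a := S.frob)
    have := S.frob_add_one_eq
    omega

end NumSgp

theorem cond_le_two_genus_sub_general (S : NumSgp) (r : ℕ) (X : Finset ℕ)
    (hXPF : ↑X ⊆ S.PF) (hr : X.card = r) :
    (S.cond : ℤ) ≤ 2 * S.genus - r + 1 := by
  have hcond := S.cond_le_frob_add_one
  have hfrob := S.frob_add_card_le_two_mul_genus hXPF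
  omega

theorem cond_le_two_genus_sub (S : NumSgp) (r : ℕ) (X : Finset ℕ)
    (hXPF : ↑X ⊆ S.PF) (hr : X.card = r) (hr1 : 1 ≤ r) (hrt : r ≤ S.PF.ncard)
    (htop : ∀ x ∈ X, ∀ y ∈ S.PF, y ∉ X → y < x) :
    (S.cond : ℤ) ≤ 2 * S.genus - r + 1 :=
  cond_le_two_genus_sub_general S r X hXPF hr
end

section
/- For any numerical semigroup S, the Frobenius number satisfies f(S) ≤ 2g(S) - t(S), and the conductor satisfies 2n(S) + t(S) - 1 ≤ c(S) ≤ 2g(S) - t(S) + 1. -/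
theorem frob_cond_genus_type_bounds (S : NumSgp) :
    (S.frob : ℤ) ≤ 2 * S.genus - S.type ∧
    2 * ({x | x ∈ S.carrier ∧ x < S.cond}.ncard : ℤ) + S.type - 1 ≤ (S.cond : ℤ) ∧
    (S.cond : ℤ) ≤ 2 * S.genus - S.type + 1 := by
  rcases Set.eq_empty_or_nonempty S.carrierᶜ with hG | hG
  · have hcar : S.carrier = Set.univ := by
      rw [← compl_compl S.carrier, hG, Set.compl_empty]
    have hfrob : S.frob = 0 := by
      rw [NumSgp.frob, hG]; exact csSup_empty
    have hgen : S.genus = 0 := by rw [NumSgp.genus, hG, Set.ncard_empty]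
    have hPF : S.PF = ∅ := by
      ext x; simp [NumSgp.PF, hcar]
    have htype : S.type = 0 := by rw [NumSgp.type, hPF, Set.ncard_empty]
    have hcond : S.cond = 0 := by
      have h0 : 0 ∈ {c | ∀ n, c ≤ n → n ∈ S.carrier} := by
        intro n _; rw [hcar]; trivial
      exact Nat.le_zero.mp (Nat.sInf_le h0)
    have hn : {x | x ∈ S.carrier ∧ x < S.cond} = ∅ := by
      ext x; simp [hcond]
    simp only [hfrob, hgen, htype, hcond, hn, Set.ncard_empty]
    norm_num
  · have hfin := S.cofinite
    have hbdd : BddAbove S.carrierᶜ := hfin.bddAbove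
    set f := S.frob with hf
    have hfmem : f ∈ S.carrierᶜ := Nat.sSup_mem hG hbdd
    have hfnot : f ∉ S.carrier := hfmem
    have hle : ∀ x ∈ S.carrierᶜ, x ≤ f := fun x hx => le_csSup hbdd hx
    have hgt : ∀ n, f < n → n ∈ S.carrier := by
      intro n hn
      by_contra h
      exact absurd (hle n h) (by omega)
    have hcond : S.cond = f + 1 := by
      have h1 : (f + 1) ∈ {c | ∀ n, c ≤ n → n ∈ S.carrier} :=
        fun n hn => hgt n (by omega)
      have h2 : ∀ c ∈ {c | ∀ n, c ≤ n → n ∈ S.carrier}, f + 1 ≤ c := by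
        intro c hc
        by_contra h
        exact hfnot (hc f (by omega))
      exact le_antisymm (Nat.sInf_le h1) (le_csInf ⟨_, h1⟩ h2)
    set N := {x | x ∈ S.carrier ∧ x < S.cond} with hNdef
    have hNsub : N ⊆ Set.Iic f := by
      intro x hx
      have h2 := hx.2
      rw [hcond] at h2
      simp only [Set.mem_Iic]
      omega
    have hNfin : N.Finite := (Set.finite_Iic f).subset hNsub
    have hinj : Set.InjOn (fun x => f - x) N := by
      intro x hx y hy hxy
      have hx' := hNsub hx
      have hy' := hNsub hy
      simp only [Set.mem_Iic] at hx' hy'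
      simp only at hxy
      omega
    set A := (fun x => f - x) '' N with hAdef
    have hAcard : A.ncard = N.ncard := Set.ncard_image_of_injOn hinj
    have hAsub : A ⊆ S.carrierᶜ := by
      rintro _ ⟨x, hx, rfl⟩
      intro hmem
      have hadd : x + (f - x) ∈ S.carrier := S.add_mem hx.1 hmem
      have hxf : x ≤ f := hNsub hx
      rw [Nat.add_sub_cancel' hxf] at hadd
      exact hfnot hadd
    have hPFsub : S.PF ⊆ S.carrierᶜ := fun x hx => hx.1
    have h0N : (0 : ℕ) ∈ N := ⟨S.zero_mem, by rw [hcond]; omega⟩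
    have hfA : f ∈ A := ⟨0, h0N, by simp⟩
    have hfPF : f ∈ S.PF := by
      refine ⟨hfnot, fun s hs hs0 => hgt _ ?_⟩
      omega
    have hinter : A ∩ S.PF = {f} := by
      apply Set.Subset.antisymm
      · rintro a ⟨⟨x, hx, rfl⟩, hPF⟩
        have hxf : x ≤ f := hNsub hx
        rcases Nat.eq_zero_or_pos x with h0 | h0
        · simp [h0]
        · exfalso
          have hadd : f - x + x ∈ S.carrier := hPF.2 x hx.1 (by omega)
          rw [Nat.sub_add_cancel hxf] at hadd
          exact hfnot hadd
      · intro a ha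
        rw [Set.mem_singleton_iff] at ha
        subst ha
        exact ⟨hfA, hfPF⟩
    have hAfin : A.Finite := hNfin.image _
    have hPFfin : S.PF.Finite := hfin.subset hPFsub
    have hunion : (A ∪ S.PF).ncard + (A ∩ S.PF).ncard = A.ncard + S.PF.ncard :=
      Set.ncard_union_add_ncard_inter A S.PF hAfin hPFfin
    have hintercard : (A ∩ S.PF).ncard = 1 := by rw [hinter, Set.ncard_singleton]
    have hUsub : A ∪ S.PF ⊆ S.carrierᶜ := Set.union_subset hAsub hPFsub
    have hUle : (A ∪ S.PF).ncard ≤ S.genus := Set.ncard_le_ncard hUsub hfin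
    have htype : S.type = S.PF.ncard := rfl
    have hkey : N.ncard + S.type ≤ S.genus + 1 := by omega
    have hpart : S.carrierᶜ ∪ N = Set.Iic f := by
      apply Set.Subset.antisymm
      · exact Set.union_subset (fun x hx => hle x hx) hNsub
      · intro x hx
        simp only [Set.mem_Iic] at hx
        by_cases hxc : x ∈ S.carrier
        · exact Set.mem_union_right _ ⟨hxc, by rw [hcond]; omega⟩
        · exact Set.mem_union_left _ hxc
    have hdisj : Disjoint S.carrierᶜ N := by
      rw [Set.disjoint_left]
      intro x hx hxN
      exact hx hxN.1
    have hIic : (Set.Iic f).ncard = f + 1 := by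
      rw [← Finset.coe_Iic, Set.ncard_coe_finset, Nat.card_Iic]
    have hcount : S.genus + N.ncard = f + 1 := by
      have h := Set.ncard_union_eq hdisj hfin hNfin
      rw [hpart, hIic] at h
      rw [NumSgp.genus]
      omega
    refine ⟨?_, ?_, ?_⟩ <;> omega
end

section
/- Let S be a numerical semigroup with multiplicity m and Ŝ its Apéry saturation (the semigroup generated by S and all elements a_k - m where a_i + a_j = a_k for Apéry elements a_i, a_j, a_k). Then every MED numerical semigroup T containing S with multiplicity m also contains Ŝ. -/
/-- Multiplicity of a set of naturals. -/
noncomputable def multS (A : Set ℕ) : ℕ := sInf {n | n ∈ A ∧ n ≠ 0}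

/-- The modified Apéry set `Âp(A, s)`: elements `x ∈ A` with `x - s` a gap of `A` or zero. -/
def hAp (A : Set ℕ) (s : ℕ) : Set ℕ :=
  {x | x ∈ A ∧ ∃ d : ℕ, x = s + d ∧ (d ∉ A ∨ d = 0)}

/-- The Apéry saturation of `A`: the submonoid generated by `A` together with all
`a_k - m` for triples `a_i + a_j = a_k` of elements of `Âp(A, m)`, `m = m(A)`. -/
def ApSat (A : Set ℕ) : Set ℕ :=
  ↑(AddSubmonoid.closure (A ∪ {x : ℕ | ∃ ai ∈ hAp A (multS A), ∃ aj ∈ hAp A (multS A),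
      ∃ ak ∈ hAp A (multS A), ai + aj = ak ∧ x + multS A = ak}))

namespace NumSgp

def toAddSubmonoid (S : NumSgp) : AddSubmonoid ℕ where
  carrier := S.carrier
  add_mem' ha hb := S.add_mem ha hb
  zero_mem' := S.zero_mem

theorem ArfElem.mem_of_add_eq {T : NumSgp} {z a b x : ℕ} (hz : T.ArfElem z)
    (ha : a ∈ T.carrier) (hb : b ∈ T.carrier) (hza : z ≤ a) (hzb : z ≤ b)
    (hx : x + z = a + b) : x ∈ T.carrier := by
  obtain rfl : x = a + b - z := by omega
  exact hz a ha b hb hza hzb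

end NumSgp

theorem le_of_mem_hAp {A : Set ℕ} {s x : ℕ} (hx : x ∈ hAp A s) : s ≤ x := by
  obtain ⟨_, d, rfl, _⟩ := hx
  exact Nat.le_add_right s d

theorem apSat_subset_of_arfElem {A : Set ℕ} {T : NumSgp} (hAT : A ⊆ T.carrier)
    (hArf : T.ArfElem (multS A)) : ApSat A ⊆ T.carrier := by
  show AddSubmonoid.closure _ ≤ T.toAddSubmonoid
  rw [AddSubmonoid.closure_le]
  rintro x (hxA | ⟨ai, hai, aj, haj, ak, -, hsum, hx⟩)
  · exact hAT hxA
  · exact hArf.mem_of_add_eq (hAT hai.1) (hAT haj.1) (le_of_mem_hAp hai) (le_of_mem_hAp haj)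
      (hx.trans hsum.symm)

theorem apsat_subset_med (S : NumSgp) (T : NumSgp)
    (hST : S.carrier ⊆ T.carrier) (hm : T.mult = S.mult) (hT : T.IsMED) :
    ApSat S.carrier ⊆ T.carrier :=
  apSat_subset_of_arfElem hST (by unfold NumSgp.IsMED at hT; rwa [hm] at hT)
end
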